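/- (Lemma 2, Appell evaluation for κ-μ shadowed fading.) Let κ > 0, μ > 0, m > 0, h̄ > 0 with θ₁ = h̄/(μ(1+κ)) and θ₂ = (μκ+m)h̄/(μ(1+κ)m), let f be the κ-μ shadowed density, and let δ ∈ (0,1). Then for every z > 0, setting A = (1 − θ₁/θ₂)/(1 + θ₁ z) and B = θ₁ z/(1 + θ₁ z) (which satisfy A, B ≥ 0 and A + B < 1, so Appell's series converges), ∫₀^∞ (z x)^δ γ(1−δ, z x) f(x) dx = (μ θ₁ z/(1−δ)) · (θ₁/θ₂)^m · (1 + θ₁ z)^{−(μ+1)} · F₂(μ+1; m, 1; μ, 2−δ; A, B). -/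

import Mathlib

/-!
Both series factors of the integrand are expanded: `₁F₁(m; μ; c x)` by definition, and the
lower incomplete gamma function, by repeated integration by parts, as
`γ(s, y) = yˢ e^{-y} Σ_q y^q / (s)_{q+1}`. With `c = 1/θ₁ - 1/θ₂` the integrand becomes a
double series, with nonnegative coefficients, of the functions `x^{μ+p+q} e^{-(1/θ₁+z) x}`.
Each of these integrates to a Gamma value, and `Γ(μ+1+n) = (μ+1)_n μ Γ(μ)` together with
`(1-δ)_{q+1} = (1-δ) (2-δ)_q` turns the `(p, q)` term into the `(p, q)` term of
`F₂(μ+1; m, 1; μ, 2-δ; A, B)` times the prefactor. Termwise integration is justified by the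
convergence of that double series: `(m)_p / (μ)_p` and `q! / (2-δ)_q` grow subexponentially,
and `Σ (μ+1)_n (A+B)^n / n!` converges for `A + B < 1`.
-/

open Real MeasureTheory Set Filter

/-- Pochhammer symbol `(a)_n = Γ(a+n)/Γ(a)`. -/
noncomputable def poch (a : ℝ) : ℕ → ℝ
  | 0 => 1
  | n + 1 => poch a n * (a + n)

/-- Confluent hypergeometric function `₁F₁(a; b; x) = Σ ((a)_n/(b)_n) xⁿ/n!`. -/
noncomputable def hyp1F1 (a b x : ℝ) : ℝ :=
  ∑' n : ℕ, (poch a n / poch b n) * x ^ n / n.factorial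

/-- Appell's hypergeometric function `F₂(α; β, β'; γ, γ'; x, y)`. -/
noncomputable def appellF2 (a β β' γ' γ'' x y : ℝ) : ℝ :=
  ∑' p : ℕ, ∑' q : ℕ,
    (poch a (p + q) * poch β p * poch β' q /
      (poch γ' p * poch γ'' q * p.factorial * q.factorial)) * x ^ p * y ^ q

/-- Lower incomplete gamma function `γ(s, x) = ∫₀ˣ t^(s-1) e^(-t) dt`. -/
noncomputable def lowerGamma (s x : ℝ) : ℝ :=
  ∫ t in Set.Ioc (0 : ℝ) x, t ^ (s - 1) * Real.exp (-t)

/-- The κ-μ shadowed probability density on `(0, ∞)`, with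
`θ₁ = h̄/(μ(1+κ))` and `θ₂ = (μκ+m)h̄/(μ(1+κ)m)`:
`f(x) = (θ₁^(m−μ)/(θ₂^m Γ(μ))) x^(μ−1) e^(−x/θ₁) ₁F₁(m; μ; ((θ₂−θ₁)/(θ₁θ₂)) x)`. -/
noncomputable def kmuPDF (κ μ m hbar x : ℝ) : ℝ :=
  (hbar / (μ * (1 + κ))) ^ (m - μ) /
      (((μ * κ + m) * hbar / (μ * (1 + κ) * m)) ^ m * Real.Gamma μ) *
    x ^ (μ - 1) * Real.exp (-x / (hbar / (μ * (1 + κ)))) *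
    hyp1F1 m μ
      (((((μ * κ + m) * hbar / (μ * (1 + κ) * m)) - hbar / (μ * (1 + κ))) /
        ((hbar / (μ * (1 + κ))) * ((μ * κ + m) * hbar / (μ * (1 + κ) * m)))) * x)

lemma poch_pos {a : ℝ} (ha : 0 < a) (n : ℕ) : 0 < poch a n := by
  induction n with
  | zero => exact one_pos
  | succ n ih => exact mul_pos ih (by positivity)

lemma poch_succ_eq_mul_poch_add_one (a : ℝ) (n : ℕ) : poch a (n + 1) = a * poch (a + 1) n := by
  induction n with
  | zero => simp [poch]
  | succ n ih =>
    rw [poch, ih, poch]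
    push_cast
    ring

lemma poch_one (n : ℕ) : poch 1 n = n.factorial := by
  induction n with
  | zero => simp [poch]
  | succ n ih => rw [poch, ih, Nat.factorial_succ]; push_cast; ring

lemma poch_le_poch {a b : ℝ} (ha : 0 < a) (hab : a ≤ b) (n : ℕ) : poch a n ≤ poch b n := by
  induction n with
  | zero => rfl
  | succ n ih =>
    exact mul_le_mul ih (by linarith) (by positivity) (poch_pos (ha.trans_le hab) n).le

lemma Gamma_add_nat_eq_poch_mul {a : ℝ} (ha : 0 < a) (n : ℕ) :
    Gamma (a + n) = poch a n * Gamma a := by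
  induction n with
  | zero => simp [poch]
  | succ n ih =>
    rw [Nat.cast_succ, ← add_assoc, Gamma_add_one (by positivity), ih, poch]
    ring

lemma exists_poch_le_mul_pow_mul_poch {a b r : ℝ} (ha : 0 < a) (hb : 0 < b) (hr : 1 < r) :
    ∃ D, ∀ n, poch a n ≤ D * r ^ n * poch b n := by
  set c : ℕ → ℝ := fun n => poch a n / (r ^ n * poch b n)
  have hden : ∀ n, 0 < r ^ n * poch b n := fun n => mul_pos (by positivity) (poch_pos hb n)
  have hc : ∀ n, 0 ≤ c n := fun n => div_nonneg (poch_pos ha n).le (hden n).le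
  -- the ratio `c (n + 1) / c n = (a + n) / (r (b + n))` is at most `1` once `n ≥ a / (r - 1)`
  set N := ⌈a / (r - 1)⌉₊
  have hanti : ∀ n, N ≤ n → c (n + 1) ≤ c n := by
    intro n hn
    have hnN : a / (r - 1) ≤ n := (Nat.le_ceil _).trans (by exact_mod_cast hn)
    rw [div_le_iff₀ (by linarith)] at hnN
    have hstep : c (n + 1) = c n * ((a + n) / (r * (b + n))) := by
      simp only [c, poch, pow_succ]
      field_simp
    rw [hstep]
    refine mul_le_of_le_one_right (hc n) ((div_le_one (by positivity)).mpr ?_)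
    nlinarith
  refine ⟨∑ j ∈ Finset.range (N + 1), c j, fun n => ?_⟩
  have hcn : c n ≤ ∑ j ∈ Finset.range (N + 1), c j := by
    rcases le_total n N with h | h
    · exact Finset.single_le_sum (fun j _ => hc j) (Finset.mem_range.mpr (by omega))
    · refine le_trans ?_ (Finset.single_le_sum (fun j _ => hc j) (Finset.self_mem_range_succ N))
      induction n, h using Nat.le_induction with
      | base => rfl
      | succ n hn ih => exact (hanti n hn).trans ih
  calc poch a n = c n * (r ^ n * poch b n) := (div_mul_cancel₀ _ (hden n).ne').symm
    _ ≤ _ := by rw [mul_assoc]; exact mul_le_mul_of_nonneg_right hcn (hden n).le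

lemma exists_one_lt_mul_lt_one {w : ℝ} (hw0 : 0 ≤ w) (hw1 : w < 1) :
    ∃ r, 1 < r ∧ r * w < 1 :=
  ⟨2 / (1 + w), by rw [lt_div_iff₀ (by linarith)]; linarith,
    by rw [div_mul_eq_mul_div, div_lt_one (by linarith)]; linarith⟩

lemma summable_poch_div_factorial_mul_pow {a w : ℝ} (ha : 0 < a) (hw0 : 0 ≤ w) (hw1 : w < 1) :
    Summable fun n => poch a n / n.factorial * w ^ n := by
  obtain ⟨r, hr, hrw⟩ := exists_one_lt_mul_lt_one hw0 hw1
  obtain ⟨D, hD⟩ := exists_poch_le_mul_pow_mul_poch ha one_pos hr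
  refine Summable.of_nonneg_of_le (fun n => by have := poch_pos ha n; positivity) (fun n => ?_)
    ((summable_geometric_of_lt_one (by positivity) hrw).mul_left D)
  calc poch a n / n.factorial * w ^ n ≤ D * r ^ n * w ^ n := by
        gcongr
        rw [div_le_iff₀ (by positivity), ← poch_one]
        exact hD n
    _ = D * (r * w) ^ n := by ring

lemma summable_hyp1F1 {a b : ℝ} (ha : 0 < a) (hb : 0 < b) (x : ℝ) :
    Summable fun n => poch a n / poch b n * x ^ n / n.factorial := by
  obtain ⟨D, hD⟩ := exists_poch_le_mul_pow_mul_poch ha hb one_lt_two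
  refine Summable.of_norm_bounded ((Real.summable_pow_div_factorial (2 * |x|)).mul_left D)
    (fun n => ?_)
  have hb' := poch_pos hb n
  have hratio : poch a n / poch b n ≤ D * 2 ^ n := by rw [div_le_iff₀ hb']; exact hD n
  rw [Real.norm_eq_abs, abs_div, abs_mul, abs_pow, abs_of_pos (div_pos (poch_pos ha n) hb'),
    Nat.abs_cast, mul_pow, mul_div_assoc, mul_div_assoc, ← mul_assoc]
  gcongr

open Finset.HasAntidiagonal in
lemma add_pow_div_factorial_eq_sum_antidiagonal (x y : ℝ) (n : ℕ) :
    (x + y) ^ n / n.factorial =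
      ∑ pq ∈ antidiagonal n, x ^ pq.1 / pq.1.factorial * (y ^ pq.2 / pq.2.factorial) := by
  rw [(Commute.all x y).add_pow', Finset.sum_div]
  refine Finset.sum_congr rfl fun ⟨p, q⟩ hpq => ?_
  rw [Finset.HasAntidiagonal.mem_antidiagonal] at hpq
  subst hpq
  have := Nat.add_choose_mul_factorial_mul_factorial p q
  rw [← Nat.choose_symm_add] at this
  dsimp only
  have hchoose : ((p + q).choose p : ℝ) ≠ 0 := by
    exact_mod_cast (Nat.choose_pos (Nat.le_add_right p q)).ne'
  rw [nsmul_eq_mul, ← this]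
  push_cast
  field_simp

open Finset.HasAntidiagonal in
lemma summable_of_summable_sum_antidiagonal {f : ℕ × ℕ → ℝ} (hf : ∀ pq, 0 ≤ f pq)
    (h : Summable fun n => ∑ pq ∈ antidiagonal n, f pq) : Summable f := by
  rw [← Finset.HasAntidiagonal.sigmaAntidiagonalEquivProd.summable_iff]
  refine (summable_sigma_of_nonneg fun _ => hf _).mpr ⟨fun n => Summable.of_finite, ?_⟩
  simpa only [Function.comp_def, Finset.HasAntidiagonal.sigmaAntidiagonalEquivProd_apply,
    Finset.tsum_subtype] using h

noncomputable def appellF2Term (α β β' γ γ' x y : ℝ) (pq : ℕ × ℕ) : ℝ :=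
  poch α (pq.1 + pq.2) * poch β pq.1 * poch β' pq.2 /
      (poch γ pq.1 * poch γ' pq.2 * pq.1.factorial * pq.2.factorial) * x ^ pq.1 * y ^ pq.2

lemma appellF2_eq_tsum_appellF2Term (α β β' γ γ' x y : ℝ) :
    appellF2 α β β' γ γ' x y = ∑' p, ∑' q, appellF2Term α β β' γ γ' x y (p, q) := rfl

lemma appellF2Term_nonneg {α β β' γ γ' x y : ℝ} (hα : 0 < α) (hβ : 0 < β) (hβ' : 0 < β')
    (hγ : 0 < γ) (hγ' : 0 < γ') (hx : 0 ≤ x) (hy : 0 ≤ y) (pq : ℕ × ℕ) :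
    0 ≤ appellF2Term α β β' γ γ' x y pq := by
  have := poch_pos hα (pq.1 + pq.2)
  have := poch_pos hβ pq.1
  have := poch_pos hβ' pq.2
  have := poch_pos hγ pq.1
  have := poch_pos hγ' pq.2
  unfold appellF2Term
  positivity

open Finset.HasAntidiagonal in
lemma summable_appellF2Term {α β β' γ γ' x y : ℝ} (hα : 0 < α) (hβ : 0 < β) (hβ' : 0 < β')
    (hγ : 0 < γ) (hγ' : 0 < γ') (hx : 0 ≤ x) (hy : 0 ≤ y) (hxy : x + y < 1) :
    Summable (appellF2Term α β β' γ γ' x y) := by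
  obtain ⟨r, hr, hrxy⟩ := exists_one_lt_mul_lt_one (add_nonneg hx hy) hxy
  obtain ⟨D, hD⟩ := exists_poch_le_mul_pow_mul_poch hβ hγ hr
  obtain ⟨D', hD'⟩ := exists_poch_le_mul_pow_mul_poch hβ' hγ' hr
  have hD0 : 0 ≤ D := by simpa [poch] using (zero_le_one.trans (hD 0))
  have hD'0 : 0 ≤ D' := by simpa [poch] using (zero_le_one.trans (hD' 0))
  set b : ℕ × ℕ → ℝ := fun pq => poch α (pq.1 + pq.2) *
    ((r * x) ^ pq.1 / pq.1.factorial * ((r * y) ^ pq.2 / pq.2.factorial))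
  have hbound : ∀ pq, appellF2Term α β β' γ γ' x y pq ≤ D * D' * b pq := by
    rintro ⟨p, q⟩
    have hratio : poch β p / poch γ p ≤ D * r ^ p :=
      (div_le_iff₀ (poch_pos hγ p)).mpr (hD p)
    have hratio' : poch β' q / poch γ' q ≤ D' * r ^ q :=
      (div_le_iff₀ (poch_pos hγ' q)).mpr (hD' q)
    have := poch_pos hα (p + q)
    have := poch_pos hβ p
    have := poch_pos hβ' q
    have := poch_pos hγ p
    have := poch_pos hγ' q
    calc appellF2Term α β β' γ γ' x y (p, q)
        = poch α (p + q) * (x ^ p / p.factorial) * (y ^ q / q.factorial) *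
            ((poch β p / poch γ p) * (poch β' q / poch γ' q)) := by
          unfold appellF2Term; ring
      _ ≤ poch α (p + q) * (x ^ p / p.factorial) * (y ^ q / q.factorial) *
            ((D * r ^ p) * (D' * r ^ q)) := by gcongr
      _ = D * D' * b (p, q) := by simp only [b]; ring
  have hrow : ∀ n : ℕ, ∑ pq ∈ antidiagonal n, D * D' * b pq =
      D * D' * (poch α n / n.factorial * (r * (x + y)) ^ n) := by
    intro n
    calc ∑ pq ∈ antidiagonal n, D * D' * b pq
        = D * D' * (poch α n * ((r * x + r * y) ^ n / n.factorial)) := by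
          rw [add_pow_div_factorial_eq_sum_antidiagonal, Finset.mul_sum, Finset.mul_sum]
          refine Finset.sum_congr rfl fun pq hpq => ?_
          rw [← Finset.HasAntidiagonal.mem_antidiagonal.mp hpq]
      _ = D * D' * (poch α n / n.factorial * (r * (x + y)) ^ n) := by ring
  refine summable_of_summable_sum_antidiagonal
    (appellF2Term_nonneg hα hβ hβ' hγ hγ' hx hy) (Summable.of_nonneg_of_le
      (fun n => Finset.sum_nonneg fun pq _ => appellF2Term_nonneg hα hβ hβ' hγ hγ' hx hy pq)
      (fun n => (Finset.sum_le_sum fun pq _ => hbound pq).trans_eq (hrow n)) ?_)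
  exact (summable_poch_div_factorial_mul_pow hα (by positivity) (by linarith)).mul_left _

lemma integrableOn_lowerGamma_integrand {s : ℝ} (hs : 0 < s) (x : ℝ) :
    IntegrableOn (fun t : ℝ => t ^ (s - 1) * exp (-t)) (Ioc 0 x) :=
  ((GammaIntegral_convergent hs).mono_set Ioc_subset_Ioi_self).congr_fun
    (fun _ _ => mul_comm _ _) measurableSet_Ioc

lemma lowerGamma_nonneg (s x : ℝ) : 0 ≤ lowerGamma s x :=
  setIntegral_nonneg measurableSet_Ioc fun t ht => by have := ht.1.le; positivity

lemma mul_lowerGamma_eq {s x : ℝ} (hs : 0 < s) (hx : 0 ≤ x) :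
    s * lowerGamma s x = x ^ s * exp (-x) + lowerGamma (s + 1) x := by
  have hint := integrableOn_lowerGamma_integrand hs x
  have hint' := integrableOn_lowerGamma_integrand (s := s + 1) (by linarith) x
  have hderiv : ∀ t ∈ Ioo 0 x, HasDerivAt (fun t => t ^ s * exp (-t))
      (s * (t ^ (s - 1) * exp (-t)) - t ^ (s + 1 - 1) * exp (-t)) t := by
    intro t ht
    refine ((hasDerivAt_rpow_const (p := s) (Or.inl ht.1.ne')).mul
      (hasDerivAt_neg t).exp).congr_deriv ?_
    rw [add_sub_cancel_right]
    ring
  have hFTC := intervalIntegral.integral_eq_sub_of_hasDerivAt_of_le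
    (f := fun t => t ^ s * exp (-t)) hx
    (((continuous_rpow_const hs.le).mul (continuous_exp.comp continuous_neg)).continuousOn)
    hderiv ((intervalIntegrable_iff_integrableOn_Ioc_of_le hx).mpr ((hint.const_mul s).sub hint'))
  rw [intervalIntegral.integral_of_le hx, integral_sub (hint.const_mul s) hint',
    integral_const_mul, zero_rpow hs.ne', zero_mul, sub_zero] at hFTC
  unfold lowerGamma
  linarith

lemma lowerGamma_le {s x : ℝ} (hs : 0 < s) (hx : 0 ≤ x) : lowerGamma s x ≤ x ^ s / s := by
  have hpow : IntegrableOn (fun t : ℝ => t ^ (s - 1)) (Ioc 0 x) :=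
    (intervalIntegrable_iff_integrableOn_Ioc_of_le hx).mp
      (intervalIntegral.intervalIntegrable_rpow' (by linarith))
  calc lowerGamma s x ≤ ∫ t in Ioc 0 x, t ^ (s - 1) :=
        setIntegral_mono_on (integrableOn_lowerGamma_integrand hs x) hpow measurableSet_Ioc
          fun t ht => mul_le_of_le_one_right (rpow_nonneg ht.1.le _)
            (exp_le_one_iff.mpr (by linarith [ht.1]))
    _ = x ^ s / s := by
        rw [← intervalIntegral.integral_of_le hx,
          integral_rpow (Or.inl (by linarith : (-1 : ℝ) < s - 1)), sub_add_cancel,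
          zero_rpow hs.ne', sub_zero]

lemma summable_pow_div_poch_succ {s : ℝ} (hs : 0 < s) (x : ℝ) :
    Summable fun q : ℕ => x ^ q / poch s (q + 1) := by
  refine Summable.of_norm_bounded ((Real.summable_pow_div_factorial |x|).mul_left s⁻¹)
    (fun q => ?_)
  have hfac : (q.factorial : ℝ) ≤ poch (s + 1) q := by
    rw [← poch_one]; exact poch_le_poch one_pos (by linarith) q
  rw [Real.norm_eq_abs, abs_div, abs_pow, abs_of_pos (poch_pos hs _),
    poch_succ_eq_mul_poch_add_one, div_mul_eq_div_div_swap, div_eq_inv_mul _ s]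
  gcongr

lemma lowerGamma_eq_sum_range_add {s x : ℝ} (hs : 0 < s) (hx : 0 ≤ x) (N : ℕ) :
    lowerGamma s x = x ^ s * exp (-x) * ∑ q ∈ Finset.range N, x ^ q / poch s (q + 1) +
      lowerGamma (s + N) x / poch s N := by
  induction N with
  | zero => simp [poch]
  | succ N ih =>
    have hsN : 0 < s + N := by positivity
    have hstep := mul_lowerGamma_eq hsN hx
    rw [rpow_add_natCast' hx hsN.ne', add_assoc, ← Nat.cast_add_one] at hstep
    have := poch_pos hs N
    rw [ih, Finset.sum_range_succ, poch]
    field_simp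
    linear_combination hstep

lemma hasSum_lowerGamma {s x : ℝ} (hs : 0 < s) (hx : 0 ≤ x) :
    HasSum (fun q : ℕ => x ^ s * exp (-x) * (x ^ q / poch s (q + 1))) (lowerGamma s x) := by
  have hterm : ∀ q, 0 ≤ x ^ q / poch s (q + 1) := fun q => by
    have := poch_pos hs (q + 1); positivity
  have hremainder : Tendsto (fun N : ℕ => lowerGamma (s + N) x / poch s N) atTop (nhds 0) := by
    refine squeeze_zero (fun N => div_nonneg (lowerGamma_nonneg _ _) (poch_pos hs N).le)
      (fun N => ?_) (by simpa using
        ((summable_pow_div_poch_succ hs x).tendsto_atTop_zero.const_mul (x ^ s)))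
    have hsN : 0 < s + N := by positivity
    have := poch_pos hs N
    calc lowerGamma (s + N) x / poch s N ≤ x ^ (s + N) / (s + N) / poch s N := by
          gcongr; exact lowerGamma_le hsN hx
      _ = x ^ s * (x ^ N / poch s (N + 1)) := by
          rw [rpow_add_natCast' hx hsN.ne', poch]; field_simp
  rw [hasSum_iff_tendsto_nat_of_nonneg (fun q => by have := hterm q; positivity)]
  refine (by simpa using (tendsto_const_nhds (x := lowerGamma s x)).sub hremainder :
    Tendsto _ _ _).congr fun N => ?_
  rw [← Finset.mul_sum, sub_eq_iff_eq_add, ← lowerGamma_eq_sum_range_add hs hx]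

lemma integral_tsum_rpow_mul_exp_neg_mul {ι : Type*} [Countable ι] {a r : ℝ} (ha : -1 < a)
    (hr : 0 < r) (c : ι → ℝ) (hc : ∀ i, 0 ≤ c i) (n : ι → ℕ)
    (hsum : Summable fun i => c i * ((1 / r) ^ (a + n i + 1) * Gamma (a + n i + 1))) :
    ∫ x in Ioi 0, ∑' i, c i * (x ^ (a + n i) * exp (-(r * x))) =
      ∑' i, c i * ((1 / r) ^ (a + n i + 1) * Gamma (a + n i + 1)) := by
  have hint : ∀ i, IntegrableOn (fun x : ℝ => c i * (x ^ (a + n i) * exp (-(r * x)))) (Ioi 0) :=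
    fun i => ((integrableOn_rpow_mul_exp_neg_mul_rpow (s := a + n i) (p := 1)
      (by linarith [(n i).cast_nonneg (α := ℝ)]) one_pos hr).congr_fun
        (fun x _ => by rw [rpow_one, neg_mul]) measurableSet_Ioi).const_mul _
  have hval : ∀ i, ∫ x in Ioi 0, c i * (x ^ (a + n i) * exp (-(r * x))) =
      c i * ((1 / r) ^ (a + n i + 1) * Gamma (a + n i + 1)) := fun i => by
    rw [integral_const_mul,
      ← integral_rpow_mul_exp_neg_mul_Ioi (by linarith [(n i).cast_nonneg (α := ℝ)]) hr,
      add_sub_cancel_right]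
  have hnorm : ∀ i, ∫ x in Ioi 0, ‖c i * (x ^ (a + n i) * exp (-(r * x)))‖ =
      ∫ x in Ioi 0, c i * (x ^ (a + n i) * exp (-(r * x))) := fun i =>
    setIntegral_congr_fun measurableSet_Ioi fun x hx => Real.norm_of_nonneg (by
      have := hc i; have : 0 ≤ x := le_of_lt hx; positivity)
  rw [← integral_tsum_of_summable_integral_norm hint (by simpa only [hnorm, hval] using hsum)]
  exact tsum_congr hval

noncomputable def kmuSeriesCoeff (μ m δ c z : ℝ) (pq : ℕ × ℕ) : ℝ :=
  poch m pq.1 / poch μ pq.1 * c ^ pq.1 / pq.1.factorial *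
    (z ^ (pq.2 + 1) / poch (1 - δ) (pq.2 + 1))

lemma kmuSeriesCoeff_nonneg {μ m δ c z : ℝ} (hμ : 0 < μ) (hm : 0 < m) (hδ : δ < 1)
    (hc : 0 ≤ c) (hz : 0 ≤ z) (pq : ℕ × ℕ) : 0 ≤ kmuSeriesCoeff μ m δ c z pq := by
  have := poch_pos hm pq.1
  have := poch_pos hμ pq.1
  have := poch_pos (sub_pos.mpr hδ) (pq.2 + 1)
  unfold kmuSeriesCoeff
  positivity

lemma hasSum_kmuSeriesCoeff {μ m δ θ c z x C : ℝ} (hμ : 0 < μ) (hm : 0 < m) (hδ : δ < 1)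
    (hc : 0 ≤ c) (hz : 0 < z) (hx : 0 < x) :
    HasSum (fun pq : ℕ × ℕ => C * kmuSeriesCoeff μ m δ c z pq *
        (x ^ (μ + ↑(pq.1 + pq.2)) * exp (-((1 / θ + z) * x))))
      ((z * x) ^ δ * lowerGamma (1 - δ) (z * x) *
        (C * x ^ (μ - 1) * exp (-x / θ) * hyp1F1 m μ (c * x))) := by
  have hzx : 0 < z * x := mul_pos hz hx
  have h1δ : 0 < 1 - δ := sub_pos.mpr hδ
  have hF := summable_hyp1F1 hm hμ (c * x)
  have hG := hasSum_lowerGamma h1δ hzx.le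
  have hFnn : ∀ p, 0 ≤ poch m p / poch μ p * (c * x) ^ p / p.factorial := fun p => by
    have := poch_pos hm p
    have := poch_pos hμ p
    have := mul_nonneg hc hx.le
    positivity
  have hGnn : ∀ q, 0 ≤ (z * x) ^ (1 - δ) * exp (-(z * x)) * ((z * x) ^ q / poch (1 - δ) (q + 1)) :=
    fun q => by have := poch_pos h1δ (q + 1); positivity
  have hprod := (hF.hasSum.mul hG (hF.mul_of_nonneg hG.summable hFnn hGnn)).mul_left
    ((z * x) ^ δ * (C * x ^ (μ - 1) * exp (-x / θ)))
  rw [hyp1F1, show ∀ a b d e : ℝ, a * b * (d * e) = a * d * (e * b) from fun _ _ _ _ => by ring]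
  refine hprod.congr_fun fun ⟨p, q⟩ => ?_
  have hexp : exp (-((1 / θ + z) * x)) = exp (-x / θ) * exp (-(z * x)) := by
    rw [← exp_add]; ring_nf
  have hpow : x ^ (μ + ↑(p + q)) = x ^ (μ - 1) * x ^ (p + q + 1) := by
    rw [← rpow_natCast, ← rpow_add hx]; push_cast; ring_nf
  have := poch_pos hμ p
  have := poch_pos h1δ (q + 1)
  have := rpow_pos_of_pos hzx δ
  simp only [kmuSeriesCoeff]
  rw [hexp, hpow, rpow_sub hzx, rpow_one, mul_pow, mul_pow]
  field_simp
  ring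

lemma kmuSeriesCoeff_mul_rpow_mul_Gamma {μ m δ c z T : ℝ} (hμ : 0 < μ) (hδ : δ < 1)
    (hT : 0 < T) (pq : ℕ × ℕ) :
    kmuSeriesCoeff μ m δ c z pq *
        (T ^ (μ + ↑(pq.1 + pq.2) + 1) * Gamma (μ + ↑(pq.1 + pq.2) + 1)) =
      μ * Gamma μ * z * T ^ (μ + 1) / (1 - δ) *
        appellF2Term (μ + 1) m 1 μ (2 - δ) (c * T) (z * T) pq := by
  obtain ⟨p, q⟩ := pq
  have hGamma : Gamma (μ + ↑(p + q) + 1) = poch (μ + 1) (p + q) * (μ * Gamma μ) := by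
    rw [add_right_comm, Gamma_add_nat_eq_poch_mul (by linarith), Gamma_add_one hμ.ne']
  have hpow : T ^ (μ + ↑(p + q) + 1) = T ^ (μ + 1) * T ^ p * T ^ q := by
    rw [add_right_comm, rpow_add_natCast hT.ne', pow_add, mul_assoc]
  have hpoch : poch (1 - δ) (q + 1) = (1 - δ) * poch (2 - δ) q := by
    rw [poch_succ_eq_mul_poch_add_one]; ring_nf
  have := poch_pos hμ p
  have := poch_pos (by linarith : 0 < 2 - δ) q
  have := Gamma_pos_of_pos hμ
  have : 1 - δ ≠ 0 := by linarith
  simp only [kmuSeriesCoeff, appellF2Term]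
  rw [hGamma, hpow, hpoch, poch_one, mul_pow, mul_pow]
  field_simp
  ring

lemma kmu_prefactor_eq {μ m δ θ₁ θ₂ z : ℝ} (hμ : 0 < μ) (hθ₁ : 0 < θ₁) (hθ₂ : 0 < θ₂)
    (hz : 0 ≤ z) :
    θ₁ ^ (m - μ) / (θ₂ ^ m * Gamma μ) *
        (μ * Gamma μ * z * (θ₁ / (1 + θ₁ * z)) ^ (μ + 1) / (1 - δ)) =
      μ * θ₁ * z / (1 - δ) * (θ₁ / θ₂) ^ m * (1 + θ₁ * z) ^ (-(μ + 1)) := by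
  have h1z : 0 < 1 + θ₁ * z := by positivity
  have := Gamma_pos_of_pos hμ
  have := rpow_pos_of_pos hθ₁ μ
  rw [div_rpow hθ₁.le h1z.le, rpow_neg h1z.le, div_rpow hθ₁.le hθ₂.le, rpow_sub hθ₁,
    rpow_add hθ₁, rpow_one]
  field_simp

theorem integral_rpow_mul_lowerGamma_mul_kmu {μ m θ₁ θ₂ δ z : ℝ} (hμ : 0 < μ) (hm : 0 < m)
    (hθ₁ : 0 < θ₁) (hθ₁₂ : θ₁ ≤ θ₂) (hδ : δ < 1) (hz : 0 < z) :
    ∫ x in Ioi 0, (z * x) ^ δ * lowerGamma (1 - δ) (z * x) *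
        (θ₁ ^ (m - μ) / (θ₂ ^ m * Gamma μ) * x ^ (μ - 1) * exp (-x / θ₁) *
          hyp1F1 m μ ((θ₂ - θ₁) / (θ₁ * θ₂) * x)) =
      μ * θ₁ * z / (1 - δ) * (θ₁ / θ₂) ^ m * (1 + θ₁ * z) ^ (-(μ + 1)) *
        appellF2 (μ + 1) m 1 μ (2 - δ) ((1 - θ₁ / θ₂) / (1 + θ₁ * z))
          (θ₁ * z / (1 + θ₁ * z)) := by
  have hθ₂ : 0 < θ₂ := hθ₁.trans_le hθ₁₂
  have h1z : 0 < 1 + θ₁ * z := by positivity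
  set C := θ₁ ^ (m - μ) / (θ₂ ^ m * Gamma μ)
  set c := (θ₂ - θ₁) / (θ₁ * θ₂)
  set T := θ₁ / (1 + θ₁ * z)
  set A := (1 - θ₁ / θ₂) / (1 + θ₁ * z)
  set B := θ₁ * z / (1 + θ₁ * z)
  have hC : 0 ≤ C := by have := Gamma_pos_of_pos hμ; positivity
  have hc : 0 ≤ c := div_nonneg (sub_nonneg.mpr hθ₁₂) (by positivity)
  have hT₀ : 0 < T := div_pos hθ₁ h1z
  have hT : 1 / (1 / θ₁ + z) = T := by simp only [T]; field_simp
  have hA : c * T = A := by simp only [c, T, A]; field_simp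
  have hB : z * T = B := by simp only [T, B]; ring
  have hAB : A + B < 1 := by
    rw [← add_div, div_lt_one h1z]; linarith [div_pos hθ₁ hθ₂]
  have hcoeff : ∀ pq : ℕ × ℕ, C * kmuSeriesCoeff μ m δ c z pq *
      ((1 / (1 / θ₁ + z)) ^ (μ + ↑(pq.1 + pq.2) + 1) * Gamma (μ + ↑(pq.1 + pq.2) + 1)) =
      μ * θ₁ * z / (1 - δ) * (θ₁ / θ₂) ^ m * (1 + θ₁ * z) ^ (-(μ + 1)) *
        appellF2Term (μ + 1) m 1 μ (2 - δ) A B pq := fun pq => by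
    rw [hT, mul_assoc, kmuSeriesCoeff_mul_rpow_mul_Gamma hμ hδ hT₀, ← mul_assoc,
      kmu_prefactor_eq hμ hθ₁ hθ₂ hz.le, hA, hB]
  have hsum := summable_appellF2Term (α := μ + 1) (β := m) (β' := 1) (γ := μ) (γ' := 2 - δ)
    (by linarith) hm one_pos hμ (by linarith) (hA ▸ mul_nonneg hc hT₀.le)
    (hB ▸ mul_nonneg hz.le hT₀.le) hAB
  calc _ = ∫ x in Ioi 0, ∑' pq : ℕ × ℕ, C * kmuSeriesCoeff μ m δ c z pq *
          (x ^ (μ + ↑(pq.1 + pq.2)) * exp (-((1 / θ₁ + z) * x))) :=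
        setIntegral_congr_fun measurableSet_Ioi fun x hx =>
          (hasSum_kmuSeriesCoeff hμ hm hδ hc hz hx).tsum_eq.symm
    _ = ∑' pq : ℕ × ℕ, μ * θ₁ * z / (1 - δ) * (θ₁ / θ₂) ^ m * (1 + θ₁ * z) ^ (-(μ + 1)) *
          appellF2Term (μ + 1) m 1 μ (2 - δ) A B pq := by
        rw [integral_tsum_rpow_mul_exp_neg_mul (by linarith) (by positivity) _
          (fun pq => mul_nonneg hC (kmuSeriesCoeff_nonneg hμ hm hδ hc hz.le pq))
          (fun pq => pq.1 + pq.2) (by simpa only [hcoeff] using hsum.mul_left _)]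
        exact tsum_congr hcoeff
    _ = _ := by rw [tsum_mul_left, appellF2_eq_tsum_appellF2Term, hsum.tsum_prod]

theorem kmu_appell_eval_general (κ μ m hbar : ℝ) (hκ : 0 < κ) (hμ : 0 < μ) (hm : 0 < m)
    (hhbar : 0 < hbar) (δ : ℝ) (hδ1 : δ < 1)
    (θ1 θ2 : ℝ) (hθ1 : θ1 = hbar / (μ * (1 + κ)))
    (hθ2 : θ2 = (μ * κ + m) * hbar / (μ * (1 + κ) * m))
    (z : ℝ) (hz : 0 < z)
    (A B : ℝ) (hA : A = (1 - θ1 / θ2) / (1 + θ1 * z)) (hB : B = θ1 * z / (1 + θ1 * z)) :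
    (∫ x in Set.Ioi (0 : ℝ), (z * x) ^ δ * lowerGamma (1 - δ) (z * x) * kmuPDF κ μ m hbar x)
      = μ * θ1 * z / (1 - δ) * (θ1 / θ2) ^ m * (1 + θ1 * z) ^ (-(μ + 1)) *
        appellF2 (μ + 1) m 1 μ (2 - δ) A B := by
  have hθ1_pos : 0 < θ1 := hθ1 ▸ by positivity
  have hθ12 : θ1 ≤ θ2 := by
    have hθ2_eq : θ2 = θ1 * (1 + μ * κ / m) := by rw [hθ2, hθ1]; field_simp; ring
    rw [hθ2_eq]
    exact le_mul_of_one_le_right hθ1_pos.le (le_add_of_nonneg_right (by positivity))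
  subst hθ1 hθ2 hA hB
  exact integral_rpow_mul_lowerGamma_mul_kmu hμ hm hθ1_pos hθ12 hδ1 hz

/-- Lemma 2 (Appell evaluation):
`∫₀^∞ (zx)^δ γ(1−δ, zx) f(x) dx
  = (μθ₁z/(1−δ)) (θ₁/θ₂)^m (1+θ₁z)^(−(μ+1)) F₂(μ+1; m, 1; μ, 2−δ; A, B)`. -/
theorem kmu_appell_eval (κ μ m hbar : ℝ) (hκ : 0 < κ) (hμ : 0 < μ) (hm : 0 < m)
    (hhbar : 0 < hbar) (δ : ℝ) (hδ0 : 0 < δ) (hδ1 : δ < 1)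
    (θ1 θ2 : ℝ) (hθ1 : θ1 = hbar / (μ * (1 + κ)))
    (hθ2 : θ2 = (μ * κ + m) * hbar / (μ * (1 + κ) * m))
    (z : ℝ) (hz : 0 < z)
    (A B : ℝ) (hA : A = (1 - θ1 / θ2) / (1 + θ1 * z)) (hB : B = θ1 * z / (1 + θ1 * z)) :
    (∫ x in Set.Ioi (0 : ℝ), (z * x) ^ δ * lowerGamma (1 - δ) (z * x) * kmuPDF κ μ m hbar x)
      = μ * θ1 * z / (1 - δ) * (θ1 / θ2) ^ m * (1 + θ1 * z) ^ (-(μ + 1)) *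
        appellF2 (μ + 1) m 1 μ (2 - δ) A B :=
  kmu_appell_eval_general κ μ m hbar hκ hμ hm hhbar δ hδ1 θ1 θ2 hθ1 hθ2 z hz A B hA hB
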